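/- Then for all 0 ≤ j, k ≤ n−1 the integral ∫₀^∞ P_j(x) Q_k(x) dx converges absolutely and equals δ_{j,k} (1 if j = k and 0 otherwise). -/

import Mathlib

/-!
Writing `Q = w ⋆ q` for the multiplicative convolution with the Beta weight
`w(t) = t^ν (1-t)^{μ-1}` on `(0,1)`, Fubini and the substitution `x = t y` give the
moment identity `∫₀^∞ x^m (w ⋆ q)(x) dx = (∫₀¹ t^m w(t) dt) (∫₀^∞ y^m q(y) dy)`, and the
first factor is the Beta integral `(m+ν)! (μ-1)! / (m+ν+μ)!`. This is exactly the reciprocal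
of the factor by which `P_j` rescales the `m`-th coefficient of `p_j`, so
`∫ P_j Q_k = ∫ p_j q_k = δ_{jk}`.
-/

open MeasureTheory Set

section ScaleIoi

variable {E : Type*} [NormedAddCommGroup E]

theorem integral_comp_div_Ioi_zero [NormedSpace ℝ E] (F : ℝ → E) {t : ℝ} (ht : 0 < t) :
    ∫ x in Ioi (0:ℝ), F (x / t) = t • ∫ y in Ioi (0:ℝ), F y := by
  simp_rw [div_eq_inv_mul]
  rw [integral_comp_mul_left_Ioi F 0 (inv_pos.2 ht), mul_zero, inv_inv]

theorem IntegrableOn.comp_div_Ioi_zero {F : ℝ → E} (hF : IntegrableOn F (Ioi 0)) {t : ℝ}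
    (ht : 0 < t) : IntegrableOn (fun x => F (x / t)) (Ioi 0) := by
  simp_rw [div_eq_inv_mul]
  exact (integrableOn_Ioi_comp_mul_left_iff F 0 (inv_pos.2 ht)).2 (by rwa [mul_zero])

end ScaleIoi

theorem integral_pow_mul_one_sub_pow (a b : ℕ) :
    ∫ t in (0:ℝ)..1, t ^ a * (1 - t) ^ b
      = (a.factorial * b.factorial : ℝ) / (a + b + 1).factorial := by
  induction b generalizing a with
  | zero =>
    simp only [pow_zero, mul_one, integral_pow, one_pow, zero_pow (Nat.succ_ne_zero a), sub_zero,
      Nat.factorial_zero, Nat.cast_one, add_zero, Nat.factorial_succ, Nat.cast_mul]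
    field_simp
    push_cast
    ring
  | succ b ih =>
    have hsplit (t : ℝ) :
        t ^ a * (1 - t) ^ (b + 1) = t ^ a * (1 - t) ^ b - t ^ (a + 1) * (1 - t) ^ b := by
      ring
    simp_rw [hsplit]
    rw [intervalIntegral.integral_sub ((by fun_prop : Continuous _).intervalIntegrable _ _)
      ((by fun_prop : Continuous _).intervalIntegrable _ _), ih, ih,
      show a + 1 + b + 1 = a + b + 1 + 1 by ring, show a + (b + 1) + 1 = a + b + 1 + 1 by ring]
    simp only [Nat.factorial_succ]
    field_simp
    push_cast
    ring

theorem integral_Ioo_pow_mul_one_sub_pow (a b : ℕ) :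
    ∫ t in Ioo (0:ℝ) 1, t ^ a * (1 - t) ^ b
      = (a.factorial * b.factorial : ℝ) / (a + b + 1).factorial := by
  rw [← integral_Ioc_eq_integral_Ioo, ← intervalIntegral.integral_of_le zero_le_one,
    integral_pow_mul_one_sub_pow]

noncomputable def mellinConv (w f : ℝ → ℝ) (x : ℝ) : ℝ :=
  ∫ t in Ioo (0:ℝ) 1, w t * f (x / t) / t

section MellinConv

variable {w f : ℝ → ℝ}

theorem integrable_mellinConv_kernel (hw : Measurable w) (hf : Measurable f)
    (hwi : IntegrableOn w (Ioo 0 1)) (hfi : IntegrableOn f (Ioi 0)) :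
    Integrable (fun z : ℝ × ℝ => w z.2 * f (z.1 / z.2) / z.2)
      ((volume.restrict (Ioi 0)).prod (volume.restrict (Ioo 0 1))) := by
  have hK : Measurable fun z : ℝ × ℝ => w z.2 * f (z.1 / z.2) / z.2 :=
    ((hw.comp measurable_snd).mul (hf.comp (measurable_fst.div measurable_snd))).div measurable_snd
  rw [integrable_prod_iff' hK.aestronglyMeasurable]
  refine ⟨(ae_restrict_iff' measurableSet_Ioo).2 (.of_forall fun t ht => ?_), ?_⟩
  · exact ((IntegrableOn.comp_div_Ioi_zero hfi ht.1).const_mul (w t)).div_const t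
  · refine IntegrableOn.congr_fun (hwi.norm.mul_const (∫ y in Ioi (0:ℝ), ‖f y‖))
      (fun t ht => ?_) measurableSet_Ioo
    simp only [norm_div, norm_mul, Real.norm_of_nonneg ht.1.le]
    rw [integral_div, integral_const_mul, integral_comp_div_Ioi_zero (fun y => ‖f y‖) ht.1,
      smul_eq_mul]
    field_simp [ht.1.ne']

theorem integrableOn_mellinConv (hw : Measurable w) (hf : Measurable f)
    (hwi : IntegrableOn w (Ioo 0 1)) (hfi : IntegrableOn f (Ioi 0)) :
    IntegrableOn (mellinConv w f) (Ioi 0) :=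
  (integrable_mellinConv_kernel hw hf hwi hfi).integral_prod_left

theorem integral_mellinConv (hw : Measurable w) (hf : Measurable f)
    (hwi : IntegrableOn w (Ioo 0 1)) (hfi : IntegrableOn f (Ioi 0)) :
    ∫ x in Ioi (0:ℝ), mellinConv w f x
      = (∫ t in Ioo (0:ℝ) 1, w t) * ∫ y in Ioi (0:ℝ), f y := by
  have hK := integrable_mellinConv_kernel hw hf hwi hfi
  have hinner : ∀ t ∈ Ioo (0:ℝ) 1,
      ∫ x in Ioi (0:ℝ), w t * f (x / t) / t = w t * ∫ y in Ioi (0:ℝ), f y := fun t ht => by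
    rw [integral_div, integral_const_mul, integral_comp_div_Ioi_zero f ht.1, smul_eq_mul]
    field_simp [ht.1.ne']
  rw [← integral_mul_const, ← setIntegral_congr_fun measurableSet_Ioo hinner]
  exact (integral_prod _ hK).symm.trans (integral_prod_symm _ hK)

theorem pow_mul_mellinConv (m : ℕ) (x : ℝ) :
    x ^ m * mellinConv w f x = mellinConv (fun t => t ^ m * w t) (fun y => y ^ m * f y) x := by
  rw [mellinConv, mellinConv, ← integral_const_mul]
  refine setIntegral_congr_fun measurableSet_Ioo fun t ht => ?_
  rw [div_pow]
  field_simp [ht.1.ne']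

theorem integrableOn_pow_mul_mellinConv (m : ℕ) (hw : Measurable w) (hf : Measurable f)
    (hwi : IntegrableOn (fun t => t ^ m * w t) (Ioo 0 1))
    (hfi : IntegrableOn (fun y => y ^ m * f y) (Ioi 0)) :
    IntegrableOn (fun x => x ^ m * mellinConv w f x) (Ioi 0) := by
  simp_rw [pow_mul_mellinConv]
  exact integrableOn_mellinConv (by fun_prop) (by fun_prop) hwi hfi

theorem integral_pow_mul_mellinConv (m : ℕ) (hw : Measurable w) (hf : Measurable f)
    (hwi : IntegrableOn (fun t => t ^ m * w t) (Ioo 0 1))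
    (hfi : IntegrableOn (fun y => y ^ m * f y) (Ioi 0)) :
    ∫ x in Ioi (0:ℝ), x ^ m * mellinConv w f x
      = (∫ t in Ioo (0:ℝ) 1, t ^ m * w t) * ∫ y in Ioi (0:ℝ), y ^ m * f y := by
  simp_rw [pow_mul_mellinConv]
  exact integral_mellinConv (by fun_prop) (by fun_prop) hwi hfi

end MellinConv

theorem integral_Ioo_pow_mul_betaWeight (m ν μ : ℕ) (hμ : 1 ≤ μ) :
    ∫ t in Ioo (0:ℝ) 1, t ^ m * (t ^ ν * (1 - t) ^ (μ - 1))
      = ((m + ν).factorial * (μ - 1).factorial : ℝ) / (m + ν + μ).factorial := by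
  simp_rw [← mul_assoc, ← pow_add, integral_Ioo_pow_mul_one_sub_pow]
  rw [show m + ν + (μ - 1) + 1 = m + ν + μ by omega]

theorem moment_mellinConv_betaWeight (m ν μ : ℕ) (hμ : 1 ≤ μ) {f : ℝ → ℝ}
    (hf : Measurable f) (hfi : IntegrableOn (fun y => y ^ m * f y) (Ioi 0)) :
    IntegrableOn (fun x => x ^ m * mellinConv (fun t => t ^ ν * (1 - t) ^ (μ - 1)) f x)
        (Ioi 0) ∧
      ∫ x in Ioi (0:ℝ), x ^ m * mellinConv (fun t => t ^ ν * (1 - t) ^ (μ - 1)) f x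
        = ((m + ν).factorial * (μ - 1).factorial : ℝ) / (m + ν + μ).factorial
          * ∫ y in Ioi (0:ℝ), y ^ m * f y := by
  have hw : Measurable fun t : ℝ => t ^ ν * (1 - t) ^ (μ - 1) := by fun_prop
  have hwi : IntegrableOn (fun t : ℝ => t ^ m * (t ^ ν * (1 - t) ^ (μ - 1))) (Ioo 0 1) :=
    (by fun_prop : Continuous _).integrableOn_Icc.mono_set Ioo_subset_Icc_self
  refine ⟨integrableOn_pow_mul_mellinConv m hw hf hwi hfi, ?_⟩
  rw [integral_pow_mul_mellinConv m hw hf hwi hfi, integral_Ioo_pow_mul_betaWeight m ν μ hμ]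

theorem integrableOn_pow_mul_of_abs {g : ℝ → ℝ} {m : ℕ} (hg : Measurable g)
    (h : IntegrableOn (fun x => x ^ m * |g x|) (Ioi 0)) :
    IntegrableOn (fun x => x ^ m * g x) (Ioi 0) :=
  h.mono' (by fun_prop) <| (ae_restrict_iff' measurableSet_Ioi).2 <| .of_forall fun x hx => by
    rw [Real.norm_eq_abs, abs_mul, abs_of_pos (pow_pos hx m)]

section Polynomial

variable {g : ℝ → ℝ} {s : Set ℝ} {N : ℕ}

theorem integrableOn_sum_pow_mul (b : ℕ → ℝ)
    (hg : ∀ m < N, IntegrableOn (fun x => x ^ m * g x) s) :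
    IntegrableOn (fun x => (∑ m ∈ Finset.range N, b m * x ^ m) * g x) s := by
  simp_rw [Finset.sum_mul, mul_assoc]
  exact integrable_finsetSum _ fun m hm => (hg m (Finset.mem_range.1 hm)).const_mul (b m)

theorem integral_sum_pow_mul (b : ℕ → ℝ)
    (hg : ∀ m < N, IntegrableOn (fun x => x ^ m * g x) s) :
    ∫ x in s, (∑ m ∈ Finset.range N, b m * x ^ m) * g x
      = ∑ m ∈ Finset.range N, b m * ∫ x in s, x ^ m * g x := by
  simp_rw [Finset.sum_mul, mul_assoc]
  rw [integral_finsetSum _ fun m hm => (hg m (Finset.mem_range.1 hm)).const_mul (b m)]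
  simp_rw [integral_const_mul]

end Polynomial

theorem stmt11_general
    (n : ℕ) (ν μ : ℕ) (hμ : 1 ≤ μ)
    (a : ℕ → ℕ → ℝ)
    (p : ℕ → ℝ → ℝ)
    (hp : ∀ k < n, ∀ x : ℝ, p k x = ∑ j ∈ Finset.range (k + 1), a j k * x ^ j)
    (q : ℕ → ℝ → ℝ) (hqmeas : ∀ k < n, Measurable (q k))
    (hqint : ∀ k < n, ∀ j < n, IntegrableOn (fun x => x ^ j * |q k x|) (Ioi 0))
    (hbiorth : ∀ j < n, ∀ k < n,
      ∫ x in Ioi (0:ℝ), p j x * q k x = if j = k then 1 else 0)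
    (P : ℕ → ℝ → ℝ)
    (hP : ∀ k < n, ∀ x : ℝ, P k x = (Nat.factorial (μ - 1) : ℝ)⁻¹ *
      ∑ j ∈ Finset.range (k + 1),
        (Nat.factorial (j + ν + μ) : ℝ) / (Nat.factorial (j + ν) : ℝ) * a j k * x ^ j)
    (Q : ℕ → ℝ → ℝ)
    (hQ : ∀ k < n, ∀ y ∈ Ioi (0:ℝ),
      Q k y = ∫ t in Ioo (0:ℝ) 1, t ^ ν * (1 - t) ^ (μ - 1) * q k (y / t) / t) :
    ∀ j < n, ∀ k < n,
      IntegrableOn (fun x => P j x * Q k x) (Ioi 0) ∧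
      ∫ x in Ioi (0:ℝ), P j x * Q k x = if j = k then 1 else 0 := by
  intro j hj k hk
  have hlt : ∀ m < j + 1, m < n := fun m hm => by omega
  have hq_mom (m : ℕ) (hm : m < n) : IntegrableOn (fun y => y ^ m * q k y) (Ioi 0) :=
    integrableOn_pow_mul_of_abs (hqmeas k hk) (hqint k hk m hm)
  have hQ_mom (m : ℕ) (hm : m < n) : IntegrableOn (fun x => x ^ m * Q k x) (Ioi 0) ∧
      ∫ x in Ioi (0:ℝ), x ^ m * Q k x
        = ((m + ν).factorial * (μ - 1).factorial : ℝ) / (m + ν + μ).factorial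
          * ∫ y in Ioi (0:ℝ), y ^ m * q k y := by
    have hQk : EqOn (fun x => x ^ m * Q k x)
        (fun x => x ^ m * mellinConv (fun t => t ^ ν * (1 - t) ^ (μ - 1)) (q k) x) (Ioi 0) :=
      fun x hx => by simp only [hQ k hk x hx, mellinConv]
    obtain ⟨hint, heq⟩ := moment_mellinConv_betaWeight m ν μ hμ (hqmeas k hk) (hq_mom m hm)
    exact ⟨hint.congr_fun hQk.symm measurableSet_Ioi,
      (setIntegral_congr_fun measurableSet_Ioi hQk).trans heq⟩
  set c : ℕ → ℝ := fun m =>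
    ((μ - 1).factorial : ℝ)⁻¹ * ((m + ν + μ).factorial / (m + ν).factorial * a m j)
  have hPc : P j = fun x => ∑ m ∈ Finset.range (j + 1), c m * x ^ m :=
    funext fun x => by simp only [hP j hj, Finset.mul_sum, c, mul_assoc]
  have hc (m : ℕ) : c m * (((m + ν).factorial * (μ - 1).factorial : ℝ)
      / (m + ν + μ).factorial) = a m j := by
    simp only [c]
    field_simp
  have hpq : ∫ y in Ioi (0:ℝ), p j y * q k y
      = ∑ m ∈ Finset.range (j + 1), a m j * ∫ y in Ioi (0:ℝ), y ^ m * q k y := by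
    simp_rw [hp j hj]
    exact integral_sum_pow_mul _ fun m hm => hq_mom m (hlt m hm)
  rw [hPc]
  refine ⟨integrableOn_sum_pow_mul c fun m hm => (hQ_mom m (hlt m hm)).1, ?_⟩
  rw [integral_sum_pow_mul c fun m hm => (hQ_mom m (hlt m hm)).1, ← hbiorth j hj k hk, hpq]
  refine Finset.sum_congr rfl fun m hm => ?_
  rw [(hQ_mom m (hlt m (Finset.mem_range.1 hm))).2, ← mul_assoc, hc]

/-- Biorthogonality of the transformed system `(P_k, Q_k)` arising from
multiplication by a truncated Haar unitary matrix with parameters `ν, μ`: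
`P_k(x) = (1/(μ-1)!) Σ_j ((j+ν+μ)!/(j+ν)!) a_{j,k} x^j` and `Q_k` is the
Mellin convolution of `q_k` with the Beta density `t^ν (1-t)^{μ-1}` on `(0,1)`. -/
theorem stmt11
    (n : ℕ) (hn : 1 ≤ n) (ν μ : ℕ) (hμ : 1 ≤ μ)
    (a : ℕ → ℕ → ℝ) (ha : ∀ k < n, a k k ≠ 0)
    (p : ℕ → ℝ → ℝ)
    (hp : ∀ k < n, ∀ x : ℝ, p k x = ∑ j ∈ Finset.range (k + 1), a j k * x ^ j)
    (q : ℕ → ℝ → ℝ) (hqmeas : ∀ k < n, Measurable (q k))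
    (hqint : ∀ k < n, ∀ j < n, IntegrableOn (fun x => x ^ j * |q k x|) (Ioi 0))
    (hbiorth : ∀ j < n, ∀ k < n,
      ∫ x in Ioi (0:ℝ), p j x * q k x = if j = k then 1 else 0)
    (P : ℕ → ℝ → ℝ)
    (hP : ∀ k < n, ∀ x : ℝ, P k x = (Nat.factorial (μ - 1) : ℝ)⁻¹ *
      ∑ j ∈ Finset.range (k + 1),
        (Nat.factorial (j + ν + μ) : ℝ) / (Nat.factorial (j + ν) : ℝ) * a j k * x ^ j)
    (Q : ℕ → ℝ → ℝ)
    (hQ : ∀ k < n, ∀ y ∈ Ioi (0:ℝ),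
      Q k y = ∫ t in Ioo (0:ℝ) 1, t ^ ν * (1 - t) ^ (μ - 1) * q k (y / t) / t) :
    ∀ j < n, ∀ k < n,
      IntegrableOn (fun x => P j x * Q k x) (Ioi 0) ∧
      ∫ x in Ioi (0:ℝ), P j x * Q k x = if j = k then 1 else 0 :=
  stmt11_general n ν μ hμ a p hp q hqmeas hqint hbiorth P hP Q hQ
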